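/- Let G ⇉ M be a Lie groupoid with compact unit space M, let Γ = T*G ⇉ A*G be its symplectic cotangent groupoid, and let p = p₀ ∘ r_Γ where p₀ : A*G \ 0 → ℝ is C^∞ and homogeneous of degree 1, with complete Hamiltonian flow χ_t on T*G \ ker r_Γ. Setting Λ_t = χ_t(A*G \ 0), one has the one-parameter group relation Λ_{t₁} · Λ_{t₂} = Λ_{t₁ + t₂} for all t₁, t₂ ∈ ℝ, where · denotes the set of products in the groupoid Γ of composable pairs of elements of Λ_{t₁} and Λ_{t₂}. -/

import Mathlib

/-!
Right-invariance along the `s`-fibres means that multiplying on the left by `χ_t` of a unit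
acts as `χ_t` itself: if `u` is a unit composable with `δ` then `u = r δ`, so
`χ_t(u) δ = χ_t(u δ) = χ_t(δ)`. Hence `χ_{t₁}(u₁) χ_{t₂}(u₂) = χ_{t₁+t₂}(u₂)`, and conversely
`χ_{t₁+t₂}(u) = χ_{t₁}(r(χ_{t₂} u)) χ_{t₂}(u)` factors through `Λ_{t₁} · Λ_{t₂}`.
-/

theorem mul_flow_unit_eq_flow {Γ : Type*} (s r : Γ → Γ) (mul : Γ → Γ → Γ)
    (hmul_unit_left : ∀ δ, mul (r δ) δ = δ) (χ : ℝ → Γ → Γ)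
    (hχs : ∀ (t : ℝ) (δ), s (χ t δ) = s δ)
    (hχinv : ∀ (t : ℝ) (δ₁ δ₂), s δ₁ = r δ₂ → χ t (mul δ₁ δ₂) = mul (χ t δ₁) δ₂)
    ⦃t : ℝ⦄ ⦃u δ : Γ⦄ (hu : s u = u) (hcomp : s (χ t u) = r δ) :
    mul (χ t u) δ = χ t δ := by
  have hu_eq : u = r δ := by rwa [hχs, hu] at hcomp
  rw [← hχinv t u δ (hu.trans hu_eq), hu_eq, hmul_unit_left]

theorem stmt_13_general {Γ : Type*}
    (U : Set Γ)                 -- the units `A*G ⊆ T*G`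
    (s r : Γ → Γ)               -- source and range of the cotangent groupoid
    (mul : Γ → Γ → Γ)           -- multiplication (meaningful on composable pairs)
    (hs_unit : ∀ u ∈ U, s u = u)
    (hmul_unit_left : ∀ δ, mul (r δ) δ = δ)
    -- the Hamiltonian flow `χ` of `p = p₀ ∘ r_Γ`
    (χ : ℝ → Γ → Γ)
    (hχgrp : ∀ t₁ t₂ : ℝ, ∀ δ, χ (t₁ + t₂) δ = χ t₁ (χ t₂ δ))
    -- the flow moves along the `s_Γ`-fibers
    (hχs : ∀ (t : ℝ) (δ), s (χ t δ) = s δ)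
    -- right-invariance of the flow
    (hχinv : ∀ (t : ℝ) (δ₁ δ₂), s δ₁ = r δ₂ → χ t (mul δ₁ δ₂) = mul (χ t δ₁) δ₂)
    -- `Λ₀ = A*G ∖ 0`
    (Λ₀ : Set Γ) (hΛ₀ : Λ₀ ⊆ U)
    -- the flow stays in `T*G ∖ (ker r_Γ ∪ ker s_Γ)`
    (hrΛ : ∀ (t : ℝ), ∀ u ∈ Λ₀, r (χ t u) ∈ Λ₀)
    (t₁ t₂ : ℝ) :
    {δ : Γ | ∃ δ₁ ∈ χ t₁ '' Λ₀, ∃ δ₂ ∈ χ t₂ '' Λ₀, s δ₁ = r δ₂ ∧ δ = mul δ₁ δ₂}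
      = χ (t₁ + t₂) '' Λ₀ := by
  have mul_flow := mul_flow_unit_eq_flow s r mul hmul_unit_left χ hχs hχinv
  ext δ
  constructor
  · rintro ⟨_, ⟨u₁, hu₁, rfl⟩, _, ⟨u₂, hu₂, rfl⟩, hcomp, rfl⟩
    refine ⟨u₂, hu₂, ?_⟩
    rw [hχgrp, mul_flow (hs_unit u₁ (hΛ₀ hu₁)) hcomp]
  · rintro ⟨u, hu, rfl⟩
    have hu₁ : r (χ t₂ u) ∈ Λ₀ := hrΛ t₂ u hu
    have hs_u₁ : s (r (χ t₂ u)) = r (χ t₂ u) := hs_unit _ (hΛ₀ hu₁)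
    have hcomp : s (χ t₁ (r (χ t₂ u))) = r (χ t₂ u) := by rw [hχs, hs_u₁]
    refine ⟨_, ⟨_, hu₁, rfl⟩, _, ⟨u, hu, rfl⟩, hcomp, ?_⟩
    rw [mul_flow hs_u₁ hcomp, hχgrp]

/-- **The one-parameter group relation `Λ_{t₁} · Λ_{t₂} = Λ_{t₁+t₂}` for the Lagrangian
submanifolds generated by the Hamiltonian flow of a right-invariant symbol in the cotangent
groupoid.**
Let `Γ = T*G ⇉ A*G` be the symplectic cotangent groupoid of a Lie groupoid `G ⇉ M` (with
compact `M`), described abstractly by its set of units `U = A*G`, its source and range maps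
`s, r : Γ → U ⊆ Γ` and its partially defined multiplication `mul`.  Let
`χ : ℝ → Γ → Γ` be the (complete) Hamiltonian flow of `p = p₀ ∘ r_Γ`, where `p₀` is `C^∞`
homogeneous of degree 1 on `A*G ∖ 0`.  The flow satisfies `s_Γ ∘ χ_t = s_Γ` (it moves along
the `s_Γ`-fibers) and is right-invariant: `χ_t(δ₁ δ₂) = χ_t(δ₁) δ₂`.  Let
`Λ₀ = A*G ∖ 0 ⊆ U` (invariant in the sense that `r_Γ(χ_t(u)) ∈ Λ₀` for `u ∈ Λ₀`, i.e. the
flow stays in `T*G ∖ (ker r_Γ ∪ ker s_Γ)`), and set `Λ_t = χ_t(Λ₀)`.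
Then for all `t₁, t₂ ∈ ℝ` : `Λ_{t₁} · Λ_{t₂} = Λ_{t₁+t₂}`, where the product is the set of
groupoid products of composable pairs. -/
theorem stmt_13 {Γ : Type*}
    (U : Set Γ)                 -- the units `A*G ⊆ T*G`
    (s r : Γ → Γ)               -- source and range of the cotangent groupoid
    (mul : Γ → Γ → Γ)           -- multiplication (meaningful on composable pairs)
    (hsU : ∀ δ, s δ ∈ U) (hrU : ∀ δ, r δ ∈ U)
    (hs_unit : ∀ u ∈ U, s u = u) (hr_unit : ∀ u ∈ U, r u = u)
    (hmul_unit_left : ∀ δ, mul (r δ) δ = δ)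
    (hmul_unit_right : ∀ δ, mul δ (s δ) = δ)
    (hs_mul : ∀ δ₁ δ₂, s δ₁ = r δ₂ → s (mul δ₁ δ₂) = s δ₂)
    (hr_mul : ∀ δ₁ δ₂, s δ₁ = r δ₂ → r (mul δ₁ δ₂) = r δ₁)
    -- the Hamiltonian flow `χ` of `p = p₀ ∘ r_Γ`
    (χ : ℝ → Γ → Γ)
    (hχ0 : ∀ δ, χ 0 δ = δ)
    (hχgrp : ∀ t₁ t₂ : ℝ, ∀ δ, χ (t₁ + t₂) δ = χ t₁ (χ t₂ δ))
    -- the flow moves along the `s_Γ`-fibers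
    (hχs : ∀ (t : ℝ) (δ), s (χ t δ) = s δ)
    -- right-invariance of the flow
    (hχinv : ∀ (t : ℝ) (δ₁ δ₂), s δ₁ = r δ₂ → χ t (mul δ₁ δ₂) = mul (χ t δ₁) δ₂)
    -- `Λ₀ = A*G ∖ 0`
    (Λ₀ : Set Γ) (hΛ₀ : Λ₀ ⊆ U)
    -- the flow stays in `T*G ∖ (ker r_Γ ∪ ker s_Γ)`
    (hrΛ : ∀ (t : ℝ), ∀ u ∈ Λ₀, r (χ t u) ∈ Λ₀)
    (t₁ t₂ : ℝ) :
    {δ : Γ | ∃ δ₁ ∈ χ t₁ '' Λ₀, ∃ δ₂ ∈ χ t₂ '' Λ₀, s δ₁ = r δ₂ ∧ δ = mul δ₁ δ₂}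
      = χ (t₁ + t₂) '' Λ₀ :=
  stmt_13_general U s r mul hs_unit hmul_unit_left χ hχgrp hχs hχinv Λ₀ hΛ₀ hrΛ t₁ t₂
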